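/- Let (M₁, μ₁) and (M₂, μ₂) be σ-finite measure spaces and 1 < q < ∞. Let k : M₂ × M₁ → [0, ∞) be measurable and suppose the positive operator K₀g(x) = ∫_{M₁} k(x, y) g(y) dμ₁(y) satisfies ‖K₀g‖_{L_q(M₂)} ≤ A ‖g‖_{L_q(M₁)} for every nonnegative g ∈ L_q(M₁). Let 𝒯 be a family of bounded linear operators T : L_q(M₁) → L_q(M₂) such that for every T ∈ 𝒯 and every f ∈ L_q(M₁), |Tf(x)| ≤ ∫_{M₁} k(x, y) |f(y)| dμ₁(y) for μ₂-almost every x. Then 𝒯 is R-bounded with R-bound at most C_q A, where C_q is a constant depending only on q (coming from Khintchine's inequality). -/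

import Mathlib

open Complex Real MeasureTheory
open scoped ENNReal

noncomputable section

/-- The Rademacher functions `r_k(u) = sign(sin(2^k π u))`. -/
def rademacher (k : ℕ) (u : ℝ) : ℝ := Real.sign (Real.sin (2 ^ k * π * u))

namespace Stmt16

/-- sign attached to a `Fin 2` index -/
def sg (b : Fin 2) : ℝ := if b = 1 then -1 else 1

lemma abs_sg (b : Fin 2) : |sg b| = 1 := by fin_cases b <;> norm_num [sg]

variable {q : ℝ}

lemma convexOn_abs_rpow (hq : 1 ≤ q) : ConvexOn ℝ Set.univ fun x : ℝ => |x| ^ q := by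
  refine ⟨convex_univ, fun x _ y _ a b ha hb hab => ?_⟩
  have h1 : |a • x + b • y| ≤ a * |x| + b * |y| := by
    calc |a • x + b • y| ≤ |a • x| + |b • y| := abs_add_le _ _
    _ = a * |x| + b * |y| := by
        rw [smul_eq_mul, smul_eq_mul, abs_mul, abs_mul, _root_.abs_of_nonneg ha,
          _root_.abs_of_nonneg hb]
  calc |a • x + b • y| ^ q ≤ (a * |x| + b * |y|) ^ q :=
        Real.rpow_le_rpow (abs_nonneg _) h1 (le_trans zero_le_one hq)
  _ ≤ a * |x| ^ q + b * |y| ^ q := by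
        have := (convexOn_rpow hq).2 (Set.mem_Ici.2 (abs_nonneg x)) (Set.mem_Ici.2 (abs_nonneg y))
          ha hb hab
        simpa using this

lemma even_convexOn_mono {h : ℝ → ℝ} (hc : ConvexOn ℝ Set.univ h)
    (he : ∀ x, h (-x) = h x) {x y : ℝ} (hxy : |x| ≤ y) : h x ≤ h y := by
  rcases ((abs_nonneg x).trans hxy).eq_or_lt with h0 | hy0
  · have hx : x = 0 := abs_eq_zero.1 (le_antisymm (h0 ▸ hxy) (abs_nonneg x))
    rw [hx, ← h0]
  · obtain ⟨hx1, hx2⟩ := abs_le.1 hxy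
    set a := (y + x) / (2 * y) with hadef
    set b := (y - x) / (2 * y) with hbdef
    have ha : 0 ≤ a := div_nonneg (by linarith) (by linarith)
    have hb : 0 ≤ b := div_nonneg (by linarith) (by linarith)
    have hab : a + b = 1 := by rw [hadef, hbdef, ← add_div, div_eq_one_iff_eq (mul_pos two_pos hy0).ne']; ring
    have hax : a • y + b • (-y) = x := by
      simp only [smul_eq_mul, hadef, hbdef]
      field_simp
      ring
    have h2 := hc.2 (Set.mem_univ y) (Set.mem_univ (-y)) ha hb hab
    rw [hax, he] at h2
    calc h x ≤ a * h y + b * h y := h2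
    _ = h y := by rw [← add_mul, hab, one_mul]

lemma convexOn_comp_affine {h : ℝ → ℝ} (hc : ConvexOn ℝ Set.univ h) (c s : ℝ) :
    ConvexOn ℝ Set.univ fun t => h (c + s * t) := by
  refine ⟨convex_univ, fun x _ y _ a b ha hb hab => ?_⟩
  have h2 : c + s * (a • x + b • y) = a • (c + s * x) + b • (c + s * y) := by
    simp only [smul_eq_mul]
    have hb' : b = 1 - a := by linarith
    rw [hb']; ring
  show h (c + s * (a • x + b • y)) ≤ a • h (c + s * x) + b • h (c + s * y)
  rw [h2]
  exact hc.2 (Set.mem_univ _) (Set.mem_univ _) ha hb hab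

lemma even_convexOn_pair {h : ℝ → ℝ} (hc : ConvexOn ℝ Set.univ h)
    (he : ∀ x, h (-x) = h x) {α β d e : ℝ} (hab : |α| ≤ β) (hde : |d| ≤ e) :
    h (α + d) + h (α - d) ≤ h (β + e) + h (β - e) := by
  have step1 : h (α + d) + h (α - d) ≤ h (α + e) + h (α - e) := by
    have kconv : ConvexOn ℝ Set.univ fun t => h (α + t) + h (α - t) := by
      have heq : (fun t : ℝ => h (α + t) + h (α - t))
          = fun t : ℝ => h (α + 1 * t) + h (α + (-1) * t) := by
        funext t; rw [one_mul, neg_one_mul, ← sub_eq_add_neg]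
      rw [heq]
      exact (convexOn_comp_affine hc α 1).add (convexOn_comp_affine hc α (-1))
    have keven : ∀ t, h (α + -t) + h (α - -t) = h (α + t) + h (α - t) := by
      intro t
      rw [sub_neg_eq_add, ← sub_eq_add_neg, add_comm]
    exact even_convexOn_mono kconv keven hde
  have step2 : h (α + e) + h (α - e) ≤ h (β + e) + h (β - e) := by
    have gconv : ConvexOn ℝ Set.univ fun t => h (t + e) + h (t - e) := by
      have heq : (fun t : ℝ => h (t + e) + h (t - e))
          = fun t : ℝ => h (e + 1 * t) + h (-e + 1 * t) := by
        funext t; ring_nf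
      rw [heq]
      exact (convexOn_comp_affine hc e 1).add (convexOn_comp_affine hc (-e) 1)
    have geven : ∀ t, h (-t + e) + h (-t - e) = h (t + e) + h (t - e) := by
      intro t
      rw [show -t + e = -(t - e) by ring, show -t - e = -(t + e) by ring, he, he, add_comm]
    exact even_convexOn_mono gconv geven hab
  linarith


/-- signed sum -/
def SS {M : ℕ} (d : Fin M → ℝ) (ε : Fin M → Fin 2) : ℝ := ∑ i, sg (ε i) * d i

def PP (q : ℝ) {M : ℕ} (α : ℝ) (d : Fin M → ℝ) : ℝ :=
  ∑ ε : Fin M → Fin 2, (|α + SS d ε| ^ q + |-α + SS d ε| ^ q)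

def QQ (q : ℝ) {M : ℕ} (d : Fin M → ℝ) : ℝ := ∑ ε : Fin M → Fin 2, |SS d ε| ^ q

lemma fin2cases (v : Fin 2) : v = 0 ∨ v = 1 := by
  fin_cases v
  · exact Or.inl rfl
  · exact Or.inr rfl

lemma PP_even {M : ℕ} (α : ℝ) (d : Fin M → ℝ) : PP q (-α) d = PP q α d := by
  unfold PP
  refine Finset.sum_congr rfl fun ε _ => ?_
  rw [neg_neg, add_comm]

lemma PP_even' {M : ℕ} (α : ℝ) (d : Fin M → ℝ) : PP q |α| d = PP q α d := by
  rcases abs_choice α with h | h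
  · rw [h]
  · rw [h, PP_even]

lemma convexOn_finset_sum {ι : Type*} (s : Finset ι) (f : ι → ℝ → ℝ) :
    (∀ i ∈ s, ConvexOn ℝ Set.univ (f i)) →
    ConvexOn ℝ Set.univ fun t => ∑ i ∈ s, f i t := by
  classical
  induction s using Finset.induction with
  | empty => intro _; simpa using convexOn_const (0 : ℝ) convex_univ
  | @insert a s ha ih =>
      intro hf
      have heq : (fun t => ∑ i ∈ insert a s, f i t) = fun t => f a t + ∑ i ∈ s, f i t := by
        funext t; rw [Finset.sum_insert ha]
      rw [heq]
      exact (hf a (Finset.mem_insert_self a s)).add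
        (ih fun i hi => hf i (Finset.mem_insert_of_mem hi))

lemma PP_convexOn (hq : 1 ≤ q) {M : ℕ} (d : Fin M → ℝ) :
    ConvexOn ℝ Set.univ fun α => PP q α d := by
  unfold PP
  apply convexOn_finset_sum
  intro ε _
  have heq : (fun α : ℝ => |α + SS d ε| ^ q + |-α + SS d ε| ^ q)
      = fun α : ℝ => |SS d ε + 1 * α| ^ q + |SS d ε + (-1) * α| ^ q := by
    funext t; ring_nf
  rw [heq]
  exact (convexOn_comp_affine (convexOn_abs_rpow hq) _ 1).add
    (convexOn_comp_affine (convexOn_abs_rpow hq) _ (-1))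

lemma keyrw (q : ℝ) {M : ℕ} (d : Fin (M + 1) → ℝ) (γ : ℝ) :
    PP q γ d = PP q (γ + d 0) (fun i => d i.succ) + PP q (γ - d 0) (fun i => d i.succ) := by
  classical
  have hSS : ∀ (b : Fin 2) (ε' : Fin M → Fin 2),
      SS d (Fin.cons b ε') = sg b * d 0 + SS (fun i => d i.succ) ε' := by
    intro b ε'
    unfold SS
    rw [Fin.sum_univ_succ]
    simp
  have s0 : sg 0 = 1 := by norm_num [sg]
  have s1 : sg 1 = -1 := by norm_num [sg]
  trans (∑ ε' : Fin M → Fin 2,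
      ((|γ + SS d (Fin.cons 0 ε')| ^ q + |-γ + SS d (Fin.cons 0 ε')| ^ q)
        + (|γ + SS d (Fin.cons 1 ε')| ^ q + |-γ + SS d (Fin.cons 1 ε')| ^ q)))
  · unfold PP
    rw [← Equiv.sum_comp (Fin.consEquiv fun _ => Fin 2)
        (fun ε => |γ + SS d ε| ^ q + |-γ + SS d ε| ^ q), Fintype.sum_prod_type,
      Fin.sum_univ_two, ← Finset.sum_add_distrib]
    rfl
  · unfold PP
    rw [← Finset.sum_add_distrib]
    refine Finset.sum_congr rfl fun ε' _ => ?_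
    rw [hSS, hSS, s0, s1]
    ring_nf

lemma claim (hq : 1 ≤ q) : ∀ {M : ℕ} (d e : Fin M → ℝ), (∀ i, |d i| ≤ e i) →
    ∀ α β : ℝ, |α| ≤ β → PP q α d ≤ PP q β e := by
  intro M
  induction M with
  | zero =>
      intro d e _ α β hab
      have hPP : ∀ (f : Fin 0 → ℝ) (γ : ℝ), PP q γ f = |γ| ^ q + |-γ| ^ q := by
        intro f γ
        unfold PP SS
        rw [Fintype.sum_unique]
        simp
      rw [hPP, hPP, abs_neg, abs_neg]
      have h1 : |α| ^ q ≤ |β| ^ q := by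
        apply Real.rpow_le_rpow (abs_nonneg α) _ (by linarith)
        rw [_root_.abs_of_nonneg ((abs_nonneg α).trans hab)]
        exact hab
      linarith
  | succ M ih =>
      intro d e hde α β hab
      have hd0 : |d 0| ≤ e 0 := hde 0
      have g1 : ∀ γ : ℝ, PP q γ (fun i => d i.succ) ≤ PP q γ (fun i => e i.succ) := by
        intro γ
        have := ih (fun i => d i.succ) (fun i => e i.succ) (fun i => hde i.succ) γ |γ| le_rfl
        rwa [PP_even'] at this
      calc PP q α d = PP q (α + d 0) (fun i => d i.succ) + PP q (α - d 0) (fun i => d i.succ) :=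
            keyrw q d α
      _ ≤ PP q (α + d 0) (fun i => e i.succ) + PP q (α - d 0) (fun i => e i.succ) := by
            have := g1 (α + d 0); have := g1 (α - d 0); linarith
      _ ≤ PP q (β + e 0) (fun i => e i.succ) + PP q (β - e 0) (fun i => e i.succ) :=
            even_convexOn_pair (PP_convexOn hq _) (fun t => PP_even t _) hab hd0
      _ = PP q β e := (keyrw q e β).symm

lemma PP_zero {M : ℕ} (d : Fin M → ℝ) : PP q 0 d = 2 * QQ q d := by
  unfold PP QQ
  simp only [zero_add, neg_zero]
  rw [Finset.sum_add_distrib, two_mul]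

lemma QQ_mono (hq : 1 ≤ q) {M : ℕ} (d e : Fin M → ℝ) (h : ∀ i, |d i| ≤ e i) :
    QQ q d ≤ QQ q e := by
  have := claim hq d e h 0 0 (by simp)
  rw [PP_zero, PP_zero] at this
  linarith

lemma QQ_abs {M : ℕ} (d : Fin M → ℝ) : QQ q (fun i => |d i|) = QQ q d := by
  classical
  set δ : Fin M → Fin 2 := fun i => if d i < 0 then 1 else 0 with hδ
  have key : ∀ ε : Fin M → Fin 2, SS (fun i => |d i|) (fun i => ε i + δ i) = SS d ε := by
    intro ε
    unfold SS
    refine Finset.sum_congr rfl fun i _ => ?_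
    show sg (ε i + δ i) * |d i| = sg (ε i) * d i
    by_cases h : d i < 0
    · have hδi : δ i = 1 := if_pos h
      rw [hδi, abs_of_neg h]
      have t0 : sg 0 = 1 := by norm_num [sg]
      have t1 : sg 1 = -1 := by norm_num [sg]
      rcases fin2cases (ε i) with h' | h' <;> rw [h']
      · rw [show (0 + 1 : Fin 2) = 1 from rfl, t1, t0]; ring
      · rw [show (1 + 1 : Fin 2) = 0 from rfl, t1, t0]; ring
    · have hδi : δ i = 0 := if_neg h
      rw [hδi, add_zero, _root_.abs_of_nonneg (not_lt.1 h)]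
  unfold QQ
  calc ∑ ε : Fin M → Fin 2, |SS (fun i => |d i|) ε| ^ q
      = ∑ ε : Fin M → Fin 2, |SS (fun i => |d i|) (Equiv.addRight δ ε)| ^ q :=
        (Equiv.sum_comp (Equiv.addRight δ) (fun ε => |SS (fun i => |d i|) ε| ^ q)).symm
  _ = ∑ ε : Fin M → Fin 2, |SS d ε| ^ q := by
        refine Finset.sum_congr rfl fun ε _ => ?_
        have : (Equiv.addRight δ) ε = fun i => ε i + δ i := rfl
        rw [this, key]

lemma QQ_le_QQ (hq : 1 ≤ q) {M : ℕ} (d e : Fin M → ℝ) (h : ∀ i, |d i| ≤ |e i|) :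
    QQ q d ≤ QQ q e := by
  calc QQ q d ≤ QQ q (fun i => |e i|) := QQ_mono hq _ _ h
  _ = QQ q e := QQ_abs e

lemma add_rpow_le (hq : 1 ≤ q) {x y : ℝ} (hx : 0 ≤ x) (hy : 0 ≤ y) :
    (x + y) ^ q ≤ 2 ^ q / 2 * (x ^ q + y ^ q) := by
  have h := (convexOn_rpow hq).2 (Set.mem_Ici.2 hx) (Set.mem_Ici.2 hy)
    (by norm_num : (0:ℝ) ≤ 1/2) (by norm_num : (0:ℝ) ≤ 1/2) (by norm_num)
  simp only [smul_eq_mul] at h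
  have h2 : (x + y) ^ q = 2 ^ q * (1/2 * x + 1/2 * y) ^ q := by
    rw [← Real.mul_rpow (by norm_num) (by positivity)]
    congr 1
    ring
  rw [h2]
  calc 2 ^ q * (1/2 * x + 1/2 * y) ^ q ≤ 2 ^ q * (1/2 * x ^ q + 1/2 * y ^ q) :=
        mul_le_mul_of_nonneg_left h (Real.rpow_nonneg (by norm_num) q)
  _ = 2 ^ q / 2 * (x ^ q + y ^ q) := by ring


lemma re_signed_sum {M : ℕ} (c : Fin M → ℂ) (ε : Fin M → Fin 2) :
    (∑ i, sg (ε i) • c i).re = SS (fun i => (c i).re) ε := by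
  rw [Complex.re_sum]
  exact Finset.sum_congr rfl fun i _ => by rw [Complex.smul_re, smul_eq_mul]

lemma im_signed_sum {M : ℕ} (c : Fin M → ℂ) (ε : Fin M → Fin 2) :
    (∑ i, sg (ε i) • c i).im = SS (fun i => (c i).im) ε := by
  rw [Complex.im_sum]
  exact Finset.sum_congr rfl fun i _ => by rw [Complex.smul_im, smul_eq_mul]

lemma QQ_nonneg {M : ℕ} (d : Fin M → ℝ) : 0 ≤ QQ q d :=
  Finset.sum_nonneg fun ε _ => Real.rpow_nonneg (abs_nonneg _) q

lemma ptI (hq : 1 ≤ q) {M : ℕ} (c : Fin M → ℂ) (β : Fin M → ℝ)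
    (h : ∀ i, ‖c i‖ ≤ β i) :
    ∑ ε : Fin M → Fin 2, ‖∑ i, sg (ε i) • c i‖ ^ q ≤ 2 ^ q * QQ q β := by
  have hβ0 : ∀ i, 0 ≤ β i := fun i => (norm_nonneg _).trans (h i)
  have point : ∀ ε : Fin M → Fin 2, ‖∑ i, sg (ε i) • c i‖ ^ q ≤
      2 ^ q / 2 * (|SS (fun i => (c i).re) ε| ^ q + |SS (fun i => (c i).im) ε| ^ q) := by
    intro ε
    have h1 : ‖∑ i, sg (ε i) • c i‖ ≤
        |(∑ i, sg (ε i) • c i).re| + |(∑ i, sg (ε i) • c i).im| := by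
      exact Complex.norm_le_abs_re_add_abs_im _
    calc ‖∑ i, sg (ε i) • c i‖ ^ q
        ≤ (|(∑ i, sg (ε i) • c i).re| + |(∑ i, sg (ε i) • c i).im|) ^ q :=
          Real.rpow_le_rpow (norm_nonneg _) h1 (by linarith)
    _ ≤ 2 ^ q / 2 * (|(∑ i, sg (ε i) • c i).re| ^ q + |(∑ i, sg (ε i) • c i).im| ^ q) :=
          add_rpow_le hq (abs_nonneg _) (abs_nonneg _)
    _ = 2 ^ q / 2 * (|SS (fun i => (c i).re) ε| ^ q + |SS (fun i => (c i).im) ε| ^ q) := by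
          rw [re_signed_sum, im_signed_sum]
  have hre : QQ q (fun i => (c i).re) ≤ QQ q β := by
    apply QQ_le_QQ hq
    intro i
    rw [_root_.abs_of_nonneg (hβ0 i)]
    calc |(c i).re| ≤ ‖c i‖ := by exact Complex.abs_re_le_norm _
    _ ≤ β i := h i
  have him : QQ q (fun i => (c i).im) ≤ QQ q β := by
    apply QQ_le_QQ hq
    intro i
    rw [_root_.abs_of_nonneg (hβ0 i)]
    calc |(c i).im| ≤ ‖c i‖ := by exact Complex.abs_im_le_norm _
    _ ≤ β i := h i
  calc ∑ ε : Fin M → Fin 2, ‖∑ i, sg (ε i) • c i‖ ^ q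
      ≤ ∑ ε : Fin M → Fin 2, 2 ^ q / 2 *
          (|SS (fun i => (c i).re) ε| ^ q + |SS (fun i => (c i).im) ε| ^ q) :=
        Finset.sum_le_sum fun ε _ => point ε
  _ = 2 ^ q / 2 * (QQ q (fun i => (c i).re) + QQ q (fun i => (c i).im)) := by
        rw [← Finset.mul_sum, Finset.sum_add_distrib]
        rfl
  _ ≤ 2 ^ q / 2 * (QQ q β + QQ q β) := by
        have h2q : (0:ℝ) ≤ 2 ^ q / 2 := by positivity
        apply mul_le_mul_of_nonneg_left _ h2q
        linarith
  _ = 2 ^ q * QQ q β := by ring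

lemma ptIII (hq : 1 ≤ q) {M : ℕ} (c : Fin M → ℂ) :
    QQ q (fun i => ‖c i‖) ≤ 2 ^ q * ∑ ε : Fin M → Fin 2, ‖∑ i, sg (ε i) • c i‖ ^ q := by
  have s1 : QQ q (fun i => ‖c i‖) ≤ QQ q (fun i => |(c i).re| + |(c i).im|) := by
    apply QQ_mono hq
    intro i
    rw [_root_.abs_of_nonneg (norm_nonneg _)]
    exact Complex.norm_le_abs_re_add_abs_im _
  have s2 : QQ q (fun i => |(c i).re| + |(c i).im|) ≤
      2 ^ q / 2 * (QQ q (fun i => |(c i).re|) + QQ q (fun i => |(c i).im|)) := by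
    unfold QQ
    calc ∑ ε : Fin M → Fin 2, |SS (fun i => |(c i).re| + |(c i).im|) ε| ^ q
        ≤ ∑ ε : Fin M → Fin 2, 2 ^ q / 2 *
            (|SS (fun i => |(c i).re|) ε| ^ q + |SS (fun i => |(c i).im|) ε| ^ q) := by
          refine Finset.sum_le_sum fun ε _ => ?_
          have hadd : SS (fun i => |(c i).re| + |(c i).im|) ε
              = SS (fun i => |(c i).re|) ε + SS (fun i => |(c i).im|) ε := by
            unfold SS
            rw [← Finset.sum_add_distrib]
            exact Finset.sum_congr rfl fun i _ => by ring
          rw [hadd]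
          calc |SS (fun i => |(c i).re|) ε + SS (fun i => |(c i).im|) ε| ^ q
              ≤ (|SS (fun i => |(c i).re|) ε| + |SS (fun i => |(c i).im|) ε|) ^ q :=
                Real.rpow_le_rpow (abs_nonneg _) (abs_add_le _ _) (by linarith)
          _ ≤ _ := add_rpow_le hq (abs_nonneg _) (abs_nonneg _)
    _ = _ := by rw [← Finset.mul_sum, Finset.sum_add_distrib]
  have s3 : QQ q (fun i => |(c i).re|) ≤ ∑ ε : Fin M → Fin 2, ‖∑ i, sg (ε i) • c i‖ ^ q := by
    rw [QQ_abs]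
    refine Finset.sum_le_sum fun ε _ => ?_
    show |SS (fun i => (c i).re) ε| ^ q ≤ _
    rw [← re_signed_sum]
    apply Real.rpow_le_rpow (abs_nonneg _) _ (by linarith)
    exact Complex.abs_re_le_norm _
  have s4 : QQ q (fun i => |(c i).im|) ≤ ∑ ε : Fin M → Fin 2, ‖∑ i, sg (ε i) • c i‖ ^ q := by
    rw [QQ_abs]
    refine Finset.sum_le_sum fun ε _ => ?_
    show |SS (fun i => (c i).im) ε| ^ q ≤ _
    rw [← im_signed_sum]
    apply Real.rpow_le_rpow (abs_nonneg _) _ (by linarith)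
    exact Complex.abs_im_le_norm _
  have h2q : (0:ℝ) ≤ 2 ^ q / 2 := by positivity
  calc QQ q (fun i => ‖c i‖)
      ≤ 2 ^ q / 2 * (QQ q (fun i => |(c i).re|) + QQ q (fun i => |(c i).im|)) := s1.trans s2
  _ ≤ 2 ^ q / 2 * (2 * ∑ ε : Fin M → Fin 2, ‖∑ i, sg (ε i) • c i‖ ^ q) := by
        apply mul_le_mul_of_nonneg_left _ h2q
        linarith
  _ = 2 ^ q * ∑ ε : Fin M → Fin 2, ‖∑ i, sg (ε i) • c i‖ ^ q := by ring


/-- the sign pattern of the `j`-th dyadic interval -/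
def pat (M j : ℕ) : Fin M → ℝ := fun i => if j / 2 ^ (M - 1 - i.1) % 2 = 1 then (-1 : ℝ) else 1

lemma rad_const {M j : ℕ} (hj : j < 2 ^ M) {u : ℝ}
    (hu : u ∈ Set.Ioo ((j : ℝ) / 2 ^ M) (((j : ℝ) + 1) / 2 ^ M)) (i : Fin M) :
    rademacher (i.1 + 1) u = pat M j i := by
  have hkM : i.1 + 1 ≤ M := i.2
  set k := i.1 + 1 with hk
  set t := M - k with ht
  have hMkt : k + t = M := Nat.add_sub_cancel' hkM
  set m := j / 2 ^ t with hm
  have h2t : (0 : ℝ) < 2 ^ t := by positivity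
  have h2k : (0 : ℝ) < 2 ^ k := by positivity
  have h2M : ((2 : ℝ) ^ M) = 2 ^ k * 2 ^ t := by rw [← pow_add, hMkt]
  have hml : (m : ℝ) * 2 ^ t ≤ (j : ℝ) := by
    have h1 : m * 2 ^ t ≤ j := Nat.div_mul_le_self j (2 ^ t)
    exact_mod_cast h1
  have hmu : (j : ℝ) + 1 ≤ ((m : ℝ) + 1) * 2 ^ t := by
    have h1 : j < (m + 1) * 2 ^ t :=
      (Nat.div_lt_iff_lt_mul (Nat.pow_pos (n := t) (by norm_num))).1 (Nat.lt_succ_self m)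
    have h2 : j + 1 ≤ (m + 1) * 2 ^ t := h1
    exact_mod_cast h2
  obtain ⟨hu1, hu2⟩ := hu
  rw [div_lt_iff₀ (by positivity : (0:ℝ) < 2 ^ M)] at hu1
  rw [lt_div_iff₀ (by positivity : (0:ℝ) < 2 ^ M)] at hu2
  rw [h2M] at hu1 hu2
  have hx1 : (m : ℝ) < 2 ^ k * u := by
    have h5 : (m : ℝ) * 2 ^ t < (2 ^ k * u) * 2 ^ t := by nlinarith
    exact lt_of_mul_lt_mul_right h5 (le_of_lt h2t)
  have hx2 : 2 ^ k * u < (m : ℝ) + 1 := by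
    have h5 : (2 ^ k * u) * 2 ^ t < ((m : ℝ) + 1) * 2 ^ t := by nlinarith
    exact lt_of_mul_lt_mul_right h5 (le_of_lt h2t)
  set x := 2 ^ k * u - m with hxdef
  have hx0 : 0 < x := by simp only [hxdef]; linarith
  have hxlt : x < 1 := by simp only [hxdef]; linarith
  have hsin : Real.sin (2 ^ k * π * u) = (-1) ^ m * Real.sin (π * x) := by
    have harg : 2 ^ k * π * u = π * x + (m : ℝ) * π := by rw [hxdef]; ring
    rw [harg, Real.sin_add_nat_mul_pi]
  have hspos : 0 < Real.sin (π * x) :=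
    Real.sin_pos_of_pos_of_lt_pi (by positivity) (by nlinarith [Real.pi_pos])
  have hMt : M - 1 - i.1 = t := by omega
  show Real.sign (Real.sin (2 ^ k * π * u)) = pat M j i
  unfold pat
  rw [hMt, ← hm]
  rcases Nat.even_or_odd m with he | ho
  · have hpow : (-1 : ℝ) ^ m = 1 := he.neg_one_pow
    rw [hsin, hpow, one_mul, Real.sign_of_pos hspos]
    have hcond : ¬ m % 2 = 1 := by
      have := Nat.even_iff.1 he
      omega
    rw [if_neg hcond]
  · have hpow : (-1 : ℝ) ^ m = -1 := ho.neg_one_pow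
    rw [hsin, hpow]
    have hneg : -1 * Real.sin (π * x) < 0 := by linarith
    rw [Real.sign_of_neg hneg]
    have hcond : m % 2 = 1 := Nat.odd_iff.1 ho
    rw [if_pos hcond]

def revArrowEquiv (M : ℕ) : (Fin M → Fin 2) ≃ (Fin M → Fin 2) :=
  ⟨fun ε => ε ∘ Fin.rev, fun ε => ε ∘ Fin.rev,
    fun ε => by funext i; simp [Fin.rev_rev],
    fun ε => by funext i; simp [Fin.rev_rev]⟩

lemma reindex (M : ℕ) (φ : (Fin M → ℝ) → ℝ) :
    ∑ j ∈ Finset.range (2 ^ M), φ (pat M j) = ∑ ε : Fin M → Fin 2, φ (fun i => sg (ε i)) := by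
  have hdig : ∀ (σ : Fin M → Fin 2) (b : Fin M),
      ((finFunctionFinEquiv σ : Fin (2 ^ M)) : ℕ) / 2 ^ (b : ℕ) % 2 = (σ b : ℕ) := by
    intro σ b
    have h1 : ((finFunctionFinEquiv.symm (finFunctionFinEquiv σ)) b : ℕ) = (σ b : ℕ) := by
      rw [Equiv.symm_apply_apply]
    exact h1
  rw [← Fin.sum_univ_eq_sum_range (fun j => φ (pat M j)) (2 ^ M)]
  rw [← Equiv.sum_comp finFunctionFinEquiv (fun j : Fin (2 ^ M) => φ (pat M (j : ℕ)))]
  rw [← Equiv.sum_comp (revArrowEquiv M) (fun ε : Fin M → Fin 2 => φ (pat M ((finFunctionFinEquiv ε : Fin (2 ^ M)) : ℕ)))]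
  refine Finset.sum_congr rfl fun ε _ => ?_
  congr 1
  funext i
  have hiM : i.1 < M := i.2
  have hbM : M - 1 - i.1 < M := by omega
  set b : Fin M := ⟨M - 1 - i.1, hbM⟩ with hb
  have hrev : b.rev = i := by
    apply Fin.ext
    rw [Fin.val_rev]
    simp only [hb]
    omega
  unfold pat
  have h2 : ((finFunctionFinEquiv (revArrowEquiv M ε) : Fin (2 ^ M)) : ℕ) / 2 ^ (M - 1 - i.1) % 2
      = ((revArrowEquiv M ε) b : ℕ) := hdig (revArrowEquiv M ε) b
  rw [h2]
  have h3 : (revArrowEquiv M ε) b = ε i := by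
    show ε b.rev = ε i
    rw [hrev]
  rw [h3]
  unfold sg
  rcases fin2cases (ε i) with h' | h' <;> rw [h'] <;> norm_num


lemma dist_real (M : ℕ) (φ : (Fin M → ℝ) → ℝ) :
    ∫ u in Set.Ioo (0 : ℝ) 1, φ (fun i => rademacher (i.1 + 1) u) =
      ((2 : ℝ) ^ M)⁻¹ * ∑ ε : Fin M → Fin 2, φ (fun i => sg (ε i)) := by
  classical
  set N : ℕ := 2 ^ M with hN
  have hN0 : (0 : ℝ) < (N : ℝ) := by
    rw [hN]; push_cast; positivity
  have hae : ∀ᵐ u : ℝ, u ∉ ⋃ j : ℕ, ({((j : ℝ) / N)} : Set ℝ) := by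
    have h0 : volume (⋃ j : ℕ, ({((j : ℝ) / N)} : Set ℝ)) = 0 :=
      measure_iUnion_null fun j => measure_singleton _
    rw [ae_iff]
    simpa [Set.range] using h0
  have heq : ∀ᵐ u ∂(volume.restrict (Set.Ioo (0 : ℝ) 1)),
      φ (fun i => rademacher (i.1 + 1) u) =
      ∑ j ∈ Finset.range N,
        Set.indicator (Set.Ioo ((j : ℝ) / N) (((j : ℝ) + 1) / N)) (fun _ => φ (pat M j)) u := by
    rw [ae_restrict_iff' measurableSet_Ioo]
    filter_upwards [hae] with u hu hu01
    obtain ⟨h0, h1⟩ := hu01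
    set j := ⌊u * N⌋₊ with hj
    have hjN : j < N := by
      rw [hj]
      rw [Nat.floor_lt (by positivity)]
      nlinarith
    have hfl : (j : ℝ) ≤ u * N := Nat.floor_le (by positivity)
    have hfl2 : u * N < (j : ℝ) + 1 := Nat.lt_floor_add_one _
    have hne : (j : ℝ) ≠ u * N := by
      intro h
      apply hu
      refine Set.mem_iUnion.2 ⟨j, ?_⟩
      rw [Set.mem_singleton_iff, eq_div_iff hN0.ne']
      rw [← h]
    have hmem : u ∈ Set.Ioo ((j : ℝ) / N) (((j : ℝ) + 1) / N) := by
      constructor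
      · rw [div_lt_iff₀ hN0]
        exact lt_of_le_of_ne hfl hne
      · rw [lt_div_iff₀ hN0]
        exact hfl2
    have hgu : ∑ j' ∈ Finset.range N,
        Set.indicator (Set.Ioo ((j' : ℝ) / N) (((j' : ℝ) + 1) / N)) (fun _ => φ (pat M j')) u
        = φ (pat M j) := by
      rw [Finset.sum_eq_single j]
      · rw [Set.indicator_of_mem hmem]
      · intro j' _ hne'
        apply Set.indicator_of_notMem
        intro hmem'
        apply hne'
        obtain ⟨ha, hb⟩ := hmem'
        rw [div_lt_iff₀ hN0] at ha
        rw [lt_div_iff₀ hN0] at hb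
        have h4 : ⌊u * N⌋₊ = j' := by
          rw [Nat.floor_eq_iff (by positivity)]
          constructor
          · push_cast
            linarith
          · push_cast
            linarith
        rw [hj, h4]
      · intro hnotin
        exact absurd (Finset.mem_range.2 hjN) hnotin
    rw [hgu]
    congr 1
    funext i
    have hNR : (N : ℝ) = 2 ^ M := by rw [hN]; push_cast; ring
    exact rad_const (hN ▸ hjN) (hNR ▸ hmem) i
  calc ∫ u in Set.Ioo (0 : ℝ) 1, φ (fun i => rademacher (i.1 + 1) u)
      = ∫ u in Set.Ioo (0 : ℝ) 1, ∑ j ∈ Finset.range N,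
          Set.indicator (Set.Ioo ((j : ℝ) / N) (((j : ℝ) + 1) / N)) (fun _ => φ (pat M j)) u :=
        integral_congr_ae heq
  _ = ∑ j ∈ Finset.range N, ∫ u in Set.Ioo (0 : ℝ) 1,
        Set.indicator (Set.Ioo ((j : ℝ) / N) (((j : ℝ) + 1) / N)) (fun _ => φ (pat M j)) u := by
      apply integral_finset_sum
      intro j _
      rw [integrable_indicator_iff measurableSet_Ioo]
      refine integrableOn_const (ne_of_lt ?_)
      calc (volume.restrict (Set.Ioo (0 : ℝ) 1)) (Set.Ioo ((j : ℝ) / N) (((j : ℝ) + 1) / N))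
          ≤ volume (Set.Ioo ((j : ℝ) / N) (((j : ℝ) + 1) / N)) := Measure.restrict_le_self _
      _ < ⊤ := by rw [Real.volume_Ioo]; exact ENNReal.ofReal_lt_top
  _ = ∑ j ∈ Finset.range N, (1 / (N : ℝ)) * φ (pat M j) := by
      refine Finset.sum_congr rfl fun j hjr => ?_
      have hjN : j < N := Finset.mem_range.1 hjr
      have hsub : Set.Ioo ((j : ℝ) / N) (((j : ℝ) + 1) / N) ⊆ Set.Ioo (0 : ℝ) 1 := by
        intro u hu
        constructor
        · exact lt_of_le_of_lt (by positivity) hu.1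
        · refine lt_of_lt_of_le hu.2 ?_
          rw [div_le_one hN0]
          have : (j : ℝ) + 1 ≤ (N : ℝ) := by exact_mod_cast Nat.succ_le_of_lt hjN
          linarith
      rw [setIntegral_indicator measurableSet_Ioo, Set.inter_eq_right.2 hsub,
        setIntegral_const, Real.volume_real_Ioo]
      have hlen : ((j : ℝ) + 1) / N - (j : ℝ) / N = 1 / N := by ring
      rw [hlen, max_eq_left (by positivity : (0:ℝ) ≤ 1 / (N:ℝ)), smul_eq_mul]
  _ = ((2 : ℝ) ^ M)⁻¹ * ∑ j ∈ Finset.range N, φ (pat M j) := by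
      rw [← Finset.mul_sum]
      congr 1
      rw [hN, one_div]
      push_cast
      norm_num
  _ = ((2 : ℝ) ^ M)⁻¹ * ∑ ε : Fin M → Fin 2, φ (fun i => sg (ε i)) := by
      rw [hN, reindex]


lemma measurable_ennrpow {α : Type*} [MeasurableSpace α] {f : α → ℝ≥0∞} (hf : Measurable f)
    (r : ℝ) : Measurable fun x => f x ^ r :=
  (ENNReal.continuous_rpow_const.measurable).comp hf

lemma rpow_inv_le {q : ℝ} (hq0 : 0 < q) {X Y C : ℝ≥0∞} (h : X ^ (1/q) ≤ C * Y ^ (1/q)) :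
    X ≤ C ^ q * Y := by
  have h1 : (X ^ (1/q)) ^ q ≤ (C * Y ^ (1/q)) ^ q := ENNReal.rpow_le_rpow h hq0.le
  rw [ENNReal.mul_rpow_of_nonneg _ _ hq0.le, ← ENNReal.rpow_mul, ← ENNReal.rpow_mul,
    one_div, inv_mul_cancel₀ hq0.ne', ENNReal.rpow_one, ENNReal.rpow_one] at h1
  exact h1

lemma lintegral_rpow_lt_top_of_rpow_inv {q : ℝ} (hq0 : 0 < q) {X : ℝ≥0∞}
    (h : X ^ (1/q) < ⊤) : X < ⊤ :=
  (ENNReal.rpow_lt_top_iff_of_pos (by positivity : (0:ℝ) < 1/q)).1 h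

lemma lpSumFin {q : ℝ} (hq : 1 ≤ q) {α : Type*} [MeasurableSpace α] (μ : Measure α) {M : ℕ}
    (g : Fin M → α → ℝ≥0∞) (hg : ∀ i, Measurable (g i))
    (hfin : ∀ i, ∫⁻ y, g i y ^ q ∂μ < ⊤) :
    ∫⁻ y, (∑ i, g i y) ^ q ∂μ < ⊤ := by
  have hq0 : 0 < q := lt_of_lt_of_le one_pos hq
  have key : ∀ s : Finset (Fin M),
      (∫⁻ y, (∑ i ∈ s, g i y) ^ q ∂μ) ^ (1/q) ≤ ∑ i ∈ s, (∫⁻ y, g i y ^ q ∂μ) ^ (1/q) := by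
    intro s
    classical
    induction s using Finset.induction with
    | empty =>
        simp only [Finset.sum_empty]
        have hz : (∫⁻ _ : α, (0:ℝ≥0∞) ^ q ∂μ) ^ (1/q) = 0 := by
          have e1 : (fun _ : α => (0:ℝ≥0∞) ^ q) = fun _ => 0 :=
            funext fun _ => ENNReal.zero_rpow_of_pos hq0
          rw [e1, lintegral_const, zero_mul,
            ENNReal.zero_rpow_of_pos (show (0:ℝ) < 1/q by positivity)]
        rw [hz]
    | @insert a s ha ih =>
        have heq : (fun y => ∑ i ∈ insert a s, g i y) = (fun y => g a y + ∑ i ∈ s, g i y) := by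
          funext y; rw [Finset.sum_insert ha]
        calc (∫⁻ y, (∑ i ∈ insert a s, g i y) ^ q ∂μ) ^ (1/q)
            = (∫⁻ y, ((fun z => g a z) + fun z => ∑ i ∈ s, g i z) y ^ q ∂μ) ^ (1/q) := by
              congr 1
              apply lintegral_congr
              intro y
              rw [Finset.sum_insert ha]
              rfl
        _ ≤ (∫⁻ y, g a y ^ q ∂μ) ^ (1/q) + (∫⁻ y, (∑ i ∈ s, g i y) ^ q ∂μ) ^ (1/q) :=
              ENNReal.lintegral_Lp_add_le (hg a).aemeasurable
                (Finset.measurable_sum s fun i _ => hg i).aemeasurable hq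
        _ ≤ (∫⁻ y, g a y ^ q ∂μ) ^ (1/q) + ∑ i ∈ s, (∫⁻ y, g i y ^ q ∂μ) ^ (1/q) :=
              add_le_add_right ih _
        _ = ∑ i ∈ insert a s, (∫⁻ y, g i y ^ q ∂μ) ^ (1/q) := by rw [Finset.sum_insert ha]
  apply lintegral_rpow_lt_top_of_rpow_inv hq0
  calc (∫⁻ y, (∑ i, g i y) ^ q ∂μ) ^ (1/q)
      ≤ ∑ i, (∫⁻ y, g i y ^ q ∂μ) ^ (1/q) := key Finset.univ
  _ < ⊤ := by
      apply ENNReal.sum_lt_top.2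
      intro i _
      exact (ENNReal.rpow_lt_top_iff_of_pos (by positivity)).2 (hfin i)

lemma SS_split {M : ℕ} (d : Fin M → ℝ) (ε : Fin M → Fin 2) :
    SS d ε = (∑ i ∈ Finset.univ.filter (fun i => ¬ ε i = 1), d i)
      - ∑ i ∈ Finset.univ.filter (fun i => ε i = 1), d i := by
  classical
  unfold SS
  rw [← Finset.sum_filter_add_sum_filter_not Finset.univ (fun i => ε i = 1)]
  have h1 : ∀ i ∈ Finset.univ.filter (fun i => ε i = 1), sg (ε i) * d i = -(d i) := by
    intro i hi
    rw [Finset.mem_filter] at hi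
    rw [hi.2]
    unfold sg
    norm_num
  have h2 : ∀ i ∈ Finset.univ.filter (fun i => ¬ ε i = 1), sg (ε i) * d i = d i := by
    intro i hi
    rw [Finset.mem_filter] at hi
    unfold sg
    rw [if_neg hi.2]
    ring
  rw [Finset.sum_congr rfl h1, Finset.sum_congr rfl h2]
  rw [Finset.sum_neg_distrib]
  ring

lemma coeFn_sum_smul {α : Type*} [MeasurableSpace α] {μ : Measure α} {p : ℝ≥0∞} {M : ℕ}
    (v : Fin M → ℝ) (gs : Fin M → Lp ℂ p μ) :
    (((∑ i, v i • gs i : Lp ℂ p μ) : Lp ℂ p μ) : α → ℂ) =ᵐ[μ]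
      fun x => ∑ i, v i • ((gs i : α → ℂ) x) := by
  classical
  have key : ∀ s : Finset (Fin M),
      (((∑ i ∈ s, v i • gs i : Lp ℂ p μ)) : α → ℂ) =ᵐ[μ]
        fun x => ∑ i ∈ s, v i • ((gs i : α → ℂ) x) := by
    intro s
    induction s using Finset.induction with
    | empty =>
        simp only [Finset.sum_empty]
        filter_upwards [Lp.coeFn_zero ℂ p μ] with x hx
        simpa using hx
    | @insert a s ha ih =>
        rw [Finset.sum_insert ha]
        filter_upwards [Lp.coeFn_add (v a • gs a) (∑ i ∈ s, v i • gs i),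
          Lp.coeFn_smul (v a) (gs a), ih] with x hx1 hx2 hx3
        rw [Finset.sum_insert ha]
        rw [hx1]
        simp only [Pi.add_apply]
        rw [hx2, hx3]
        rfl
  exact key Finset.univ


lemma ofReal_norm_rpow_eq {α : Type*} [MeasurableSpace α] {μ : Measure α} {q : ℝ} (hq0 : 0 < q)
    {M : ℕ} (v : Fin M → ℝ) (gs : Fin M → Lp ℂ (ENNReal.ofReal q) μ) (Gs : Fin M → α → ℂ)
    (hae : ∀ i, (gs i : α → ℂ) =ᵐ[μ] Gs i) :
    ENNReal.ofReal (‖∑ i, v i • gs i‖ ^ q)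
      = ∫⁻ x, (‖∑ i, v i • Gs i x‖₊ : ℝ≥0∞) ^ q ∂μ := by
  have hp0 : (ENNReal.ofReal q) ≠ 0 := by
    simp only [ne_eq, ENNReal.ofReal_eq_zero, not_le]
    exact hq0
  have hptop : (ENNReal.ofReal q) ≠ ⊤ := ENNReal.ofReal_ne_top
  have htr : (ENNReal.ofReal q).toReal = q := ENNReal.toReal_ofReal hq0.le
  have hcoe : ((∑ i, v i • gs i : Lp ℂ (ENNReal.ofReal q) μ) : α → ℂ) =ᵐ[μ]
      fun x => ∑ i, v i • Gs i x := by
    have h1 := coeFn_sum_smul (μ := μ) (p := ENNReal.ofReal q) v gs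
    have h2 : ∀ᵐ x ∂μ, ∀ i, (gs i : α → ℂ) x = Gs i x := ae_all_iff.2 hae
    filter_upwards [h1, h2] with x hx1 hx2
    rw [hx1]
    exact Finset.sum_congr rfl fun i _ => by rw [hx2 i]
  have heq : eLpNorm (((∑ i, v i • gs i : Lp ℂ (ENNReal.ofReal q) μ)) : α → ℂ)
      (ENNReal.ofReal q) μ
      = (∫⁻ x, (‖∑ i, v i • Gs i x‖₊ : ℝ≥0∞) ^ q ∂μ) ^ (1/q) := by
    rw [eLpNorm_congr_ae hcoe, eLpNorm_eq_lintegral_rpow_enorm_toReal hp0 hptop, htr]; rfl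
  have hfin : (∫⁻ x, (‖∑ i, v i • Gs i x‖₊ : ℝ≥0∞) ^ q ∂μ) ≠ ⊤ := by
    refine (lintegral_rpow_lt_top_of_rpow_inv hq0 ?_).ne
    rw [← heq]
    exact Lp.eLpNorm_lt_top _
  rw [Lp.norm_def, heq, ENNReal.toReal_rpow, ← ENNReal.rpow_mul, one_div,
    inv_mul_cancel₀ hq0.ne', ENNReal.rpow_one, ENNReal.ofReal_toReal hfin]

lemma SS_kernel_bound {α : Type*} [MeasurableSpace α] {μ : Measure α} {M : ℕ}
    (w : α → ℝ≥0∞) (hw : Measurable w) (F : Fin M → α → ℂ) (hF : ∀ i, Measurable (F i))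
    (ε : Fin M → Fin 2)
    (hfin : ∀ i, ∫⁻ y, w y * (‖F i y‖₊ : ℝ≥0∞) ∂μ < ⊤) :
    |SS (fun i => (∫⁻ y, w y * (‖F i y‖₊ : ℝ≥0∞) ∂μ).toReal) ε|
      ≤ (∫⁻ y, w y * ENNReal.ofReal |SS (fun i => ‖F i y‖) ε| ∂μ).toReal := by
  classical
  set Pos := Finset.univ.filter (fun i : Fin M => ¬ ε i = 1) with hPos
  set Neg := Finset.univ.filter (fun i : Fin M => ε i = 1) with hNeg
  have hmeas : ∀ (s : Finset (Fin M)), Measurable fun y => ∑ i ∈ s, (‖F i y‖₊ : ℝ≥0∞) :=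
    fun s => Finset.measurable_sum s fun i _ => (hF i).enorm
  have hWm : Measurable fun y => w y * ENNReal.ofReal |SS (fun i => ‖F i y‖) ε| := by
    apply hw.mul
    apply Measurable.ennreal_ofReal
    apply Measurable.abs
    exact Finset.measurable_sum Finset.univ fun i _ => ((hF i).norm).const_mul (sg (ε i))
  -- set level sums
  have hsum : ∀ (s : Finset (Fin M)),
      ∫⁻ y, w y * ∑ i ∈ s, (‖F i y‖₊ : ℝ≥0∞) ∂μ
        = ∑ i ∈ s, ∫⁻ y, w y * (‖F i y‖₊ : ℝ≥0∞) ∂μ := by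
    intro s
    rw [← lintegral_finset_sum s (f := fun i y => w y * (‖F i y‖₊ : ℝ≥0∞)) fun i _ => hw.mul (hF i).nnnorm.coe_nnreal_ennreal]
    apply lintegral_congr
    intro y
    rw [Finset.mul_sum]
  have hsfin : ∀ (s : Finset (Fin M)), (∫⁻ y, w y * ∑ i ∈ s, (‖F i y‖₊ : ℝ≥0∞) ∂μ) ≠ ⊤ := by
    intro s
    rw [hsum]
    exact (ENNReal.sum_lt_top.2 fun i _ => hfin i).ne
  have hWfin : (∫⁻ y, w y * ENNReal.ofReal |SS (fun i => ‖F i y‖) ε| ∂μ) ≠ ⊤ := by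
    refine ne_top_of_le_ne_top (hsfin Finset.univ) (lintegral_mono fun y => ?_)
    apply mul_le_mul_right
    calc ENNReal.ofReal |SS (fun i => ‖F i y‖) ε| ≤ ENNReal.ofReal (∑ i, ‖F i y‖) := by
          apply ENNReal.ofReal_le_ofReal
          calc |SS (fun i => ‖F i y‖) ε| ≤ ∑ i, |sg (ε i) * ‖F i y‖| := by
                unfold SS
                exact Finset.abs_sum_le_sum_abs _ _
          _ = ∑ i, ‖F i y‖ := Finset.sum_congr rfl fun i _ => by
                rw [abs_mul, abs_sg, one_mul, abs_norm]
    _ = ∑ i, (‖F i y‖₊ : ℝ≥0∞) := by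
          rw [ENNReal.ofReal_sum_of_nonneg fun i _ => norm_nonneg _]
          exact Finset.sum_congr rfl fun i _ => ofReal_norm _
  -- pointwise split inequalities
  have hpoint : ∀ (s t : Finset (Fin M)), (∀ y,
      w y * ∑ i ∈ s, (‖F i y‖₊ : ℝ≥0∞) ≤
        w y * ENNReal.ofReal |(∑ i ∈ s, ‖F i y‖) - ∑ i ∈ t, ‖F i y‖|
          + w y * ∑ i ∈ t, (‖F i y‖₊ : ℝ≥0∞)) := by
    intro s t y
    rw [← mul_add]
    apply mul_le_mul_right
    have hco : ∀ (u : Finset (Fin M)),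
        (∑ i ∈ u, (‖F i y‖₊ : ℝ≥0∞)) = ENNReal.ofReal (∑ i ∈ u, ‖F i y‖) := by
      intro u
      rw [ENNReal.ofReal_sum_of_nonneg fun i _ => norm_nonneg _]
      exact Finset.sum_congr rfl fun i _ => (ofReal_norm _).symm
    rw [hco s, hco t, ← ENNReal.ofReal_add (abs_nonneg _) (Finset.sum_nonneg fun i _ => norm_nonneg _)]
    apply ENNReal.ofReal_le_ofReal
    have h3 : (∑ i ∈ s, ‖F i y‖) - ∑ i ∈ t, ‖F i y‖ ≤ |(∑ i ∈ s, ‖F i y‖) - ∑ i ∈ t, ‖F i y‖| :=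
      le_abs_self _
    linarith
  -- measurability of the difference integrand
  have hdm : ∀ (s t : Finset (Fin M)),
      Measurable fun y => w y * ENNReal.ofReal |(∑ i ∈ s, ‖F i y‖) - ∑ i ∈ t, ‖F i y‖| := by
    intro s t
    apply hw.mul
    apply Measurable.ennreal_ofReal
    apply Measurable.abs
    exact (Finset.measurable_sum s fun i _ => (hF i).norm).sub
      (Finset.measurable_sum t fun i _ => (hF i).norm)
  have hSSW : (∫⁻ y, w y * ENNReal.ofReal |SS (fun i => ‖F i y‖) ε| ∂μ)
      = ∫⁻ y, w y * ENNReal.ofReal |(∑ i ∈ Pos, ‖F i y‖) - ∑ i ∈ Neg, ‖F i y‖| ∂μ := by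
    apply lintegral_congr
    intro y
    rw [SS_split]
  have hSSW2 : (∫⁻ y, w y * ENNReal.ofReal |SS (fun i => ‖F i y‖) ε| ∂μ)
      = ∫⁻ y, w y * ENNReal.ofReal |(∑ i ∈ Neg, ‖F i y‖) - ∑ i ∈ Pos, ‖F i y‖| ∂μ := by
    rw [hSSW]
    apply lintegral_congr
    intro y
    rw [abs_sub_comm]
  have hP : (∫⁻ y, w y * ∑ i ∈ Pos, (‖F i y‖₊ : ℝ≥0∞) ∂μ)
      ≤ (∫⁻ y, w y * ENNReal.ofReal |SS (fun i => ‖F i y‖) ε| ∂μ)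
        + ∫⁻ y, w y * ∑ i ∈ Neg, (‖F i y‖₊ : ℝ≥0∞) ∂μ := by
    rw [hSSW]
    calc (∫⁻ y, w y * ∑ i ∈ Pos, (‖F i y‖₊ : ℝ≥0∞) ∂μ)
        ≤ ∫⁻ y, (w y * ENNReal.ofReal |(∑ i ∈ Pos, ‖F i y‖) - ∑ i ∈ Neg, ‖F i y‖|
          + w y * ∑ i ∈ Neg, (‖F i y‖₊ : ℝ≥0∞)) ∂μ := lintegral_mono (hpoint Pos Neg)
    _ = _ := lintegral_add_left (hdm Pos Neg) _
  have hQ : (∫⁻ y, w y * ∑ i ∈ Neg, (‖F i y‖₊ : ℝ≥0∞) ∂μ)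
      ≤ (∫⁻ y, w y * ENNReal.ofReal |SS (fun i => ‖F i y‖) ε| ∂μ)
        + ∫⁻ y, w y * ∑ i ∈ Pos, (‖F i y‖₊ : ℝ≥0∞) ∂μ := by
    rw [hSSW2]
    calc (∫⁻ y, w y * ∑ i ∈ Neg, (‖F i y‖₊ : ℝ≥0∞) ∂μ)
        ≤ ∫⁻ y, (w y * ENNReal.ofReal |(∑ i ∈ Neg, ‖F i y‖) - ∑ i ∈ Pos, ‖F i y‖|
          + w y * ∑ i ∈ Pos, (‖F i y‖₊ : ℝ≥0∞)) ∂μ := lintegral_mono (hpoint Neg Pos)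
    _ = _ := lintegral_add_left (hdm Neg Pos) _
  -- pass to real numbers
  have hadd1 : ((∫⁻ y, w y * ENNReal.ofReal |SS (fun i => ‖F i y‖) ε| ∂μ)
      + ∫⁻ y, w y * ∑ i ∈ Neg, (‖F i y‖₊ : ℝ≥0∞) ∂μ) ≠ ⊤ :=
    ENNReal.add_ne_top.2 ⟨hWfin, hsfin Neg⟩
  have hadd2 : ((∫⁻ y, w y * ENNReal.ofReal |SS (fun i => ‖F i y‖) ε| ∂μ)
      + ∫⁻ y, w y * ∑ i ∈ Pos, (‖F i y‖₊ : ℝ≥0∞) ∂μ) ≠ ⊤ :=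
    ENNReal.add_ne_top.2 ⟨hWfin, hsfin Pos⟩
  have tP := ENNReal.toReal_mono hadd1 hP
  have tQ := ENNReal.toReal_mono hadd2 hQ
  rw [ENNReal.toReal_add hWfin (hsfin Neg)] at tP
  rw [ENNReal.toReal_add hWfin (hsfin Pos)] at tQ
  have hsPr : ∀ (s : Finset (Fin M)),
      ∑ i ∈ s, (∫⁻ y, w y * (‖F i y‖₊ : ℝ≥0∞) ∂μ).toReal
        = (∫⁻ y, w y * ∑ i ∈ s, (‖F i y‖₊ : ℝ≥0∞) ∂μ).toReal := by
    intro s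
    rw [hsum s, ENNReal.toReal_sum fun i _ => (hfin i).ne]
  rw [SS_split]
  rw [hsPr Pos, hsPr Neg]
  rw [abs_sub_le_iff]
  constructor
  · linarith
  · linarith


lemma ofReal_absSS_le {M : ℕ} (ε : Fin M → Fin 2) (c : Fin M → ℂ) :
    ENNReal.ofReal |SS (fun i => ‖c i‖) ε| ≤ ∑ i, (‖c i‖₊ : ℝ≥0∞) := by
  calc ENNReal.ofReal |SS (fun i => ‖c i‖) ε| ≤ ENNReal.ofReal (∑ i, ‖c i‖) := by
        apply ENNReal.ofReal_le_ofReal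
        calc |SS (fun i => ‖c i‖) ε| ≤ ∑ i, |sg (ε i) * ‖c i‖| := by
              unfold SS
              exact Finset.abs_sum_le_sum_abs _ _
        _ = ∑ i, ‖c i‖ := Finset.sum_congr rfl fun i _ => by
              rw [abs_mul, abs_sg, one_mul, abs_norm]
  _ = ∑ i, (‖c i‖₊ : ℝ≥0∞) := by
        rw [ENNReal.ofReal_sum_of_nonneg fun i _ => norm_nonneg _]
        exact Finset.sum_congr rfl fun i _ => ofReal_norm _

lemma lintegral_mul_nnnorm_sum {α : Type*} [MeasurableSpace α] {μ : Measure α} {M : ℕ}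
    (w : α → ℝ≥0∞) (hw : Measurable w) (F : Fin M → α → ℂ) (hF : ∀ i, Measurable (F i)) :
    ∫⁻ y, w y * ∑ i, (‖F i y‖₊ : ℝ≥0∞) ∂μ = ∑ i, ∫⁻ y, w y * (‖F i y‖₊ : ℝ≥0∞) ∂μ := by
  rw [← lintegral_finset_sum Finset.univ (f := fun i y => w y * (‖F i y‖₊ : ℝ≥0∞)) fun i _ => hw.mul (hF i).nnnorm.coe_nnreal_ennreal]
  apply lintegral_congr
  intro y
  rw [Finset.mul_sum]

end Stmt16

open Stmt16

/-- Domination principle: a family of operators on `L_q` pointwise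
dominated by a single bounded positive kernel operator is R-bounded, with R-bound at
most `C_q·A` where `C_q` depends only on `q`. -/
theorem statement16 (q : ℝ) (hq1 : 1 < q) [Fact (1 ≤ ENNReal.ofReal q)] :
    ∃ Cq : ℝ, 0 < Cq ∧
      ∀ (M₁ M₂ : Type) [MeasurableSpace M₁] [MeasurableSpace M₂]
        (μ₁ : Measure M₁) (μ₂ : Measure M₂) [SigmaFinite μ₁] [SigmaFinite μ₂]
        (k : M₂ × M₁ → ℝ), Measurable k → (∀ p, 0 ≤ k p) →
        ∀ A : ℝ, 0 ≤ A →
        -- `L_q`-boundedness of the positive kernel operator `K₀`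
        (∀ g : M₁ → ℝ≥0∞, Measurable g → (∫⁻ y, g y ^ (q : ℝ) ∂μ₁) < ⊤ →
          (∫⁻ x, (∫⁻ y, ENNReal.ofReal (k (x, y)) * g y ∂μ₁) ^ (q : ℝ) ∂μ₂) ^ (1 / q) ≤
            ENNReal.ofReal A * (∫⁻ y, g y ^ (q : ℝ) ∂μ₁) ^ (1 / q)) →
        ∀ 𝒯 : Set (Lp ℂ (ENNReal.ofReal q) μ₁ →L[ℂ] Lp ℂ (ENNReal.ofReal q) μ₂),
        -- pointwise domination of each `T ∈ 𝒯` by the kernel operator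
        (∀ T ∈ 𝒯, ∀ f : Lp ℂ (ENNReal.ofReal q) μ₁,
          ∀ᵐ x ∂μ₂, (‖(T f : M₂ → ℂ) x‖₊ : ℝ≥0∞) ≤
            ∫⁻ y, ENNReal.ofReal (k (x, y)) * (‖(f : M₁ → ℂ) y‖₊ : ℝ≥0∞) ∂μ₁) →
        -- R-boundedness with bound `Cq * A`
        ∀ (M : ℕ) (Ts : Fin M → (Lp ℂ (ENNReal.ofReal q) μ₁ →L[ℂ] Lp ℂ (ENNReal.ofReal q) μ₂)),
          (∀ i, Ts i ∈ 𝒯) →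
          ∀ fs : Fin M → Lp ℂ (ENNReal.ofReal q) μ₁,
            (∫ u in Set.Ioo (0 : ℝ) 1,
                ‖∑ i, rademacher (i.1 + 1) u • (Ts i) (fs i)‖ ^ q) ^ (1 / q) ≤
              Cq * A *
                (∫ u in Set.Ioo (0 : ℝ) 1,
                    ‖∑ i, rademacher (i.1 + 1) u • fs i‖ ^ q) ^ (1 / q) := by
  classical
  refine ⟨4, by norm_num, ?_⟩
  intro M₁ M₂ _ _ μ₁ μ₂ _ _ k hk hk0 A hA hK 𝒯 hdom M Ts hTs fs
  have hq0 : (0:ℝ) < q := lt_trans one_pos hq1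
  have hq1' : (1:ℝ) ≤ q := hq1.le
  have hp0 : (ENNReal.ofReal q) ≠ 0 := by
    simp only [ne_eq, ENNReal.ofReal_eq_zero, not_le]
    exact hq0
  have hptop : (ENNReal.ofReal q) ≠ ⊤ := ENNReal.ofReal_ne_top
  have htr : (ENNReal.ofReal q).toReal = q := ENNReal.toReal_ofReal hq0.le
  -- measurable representatives
  set F : Fin M → M₁ → ℂ :=
    fun i => ((Lp.memLp (fs i)).aestronglyMeasurable).mk _ with hFdef
  have hFm : ∀ i, Measurable (F i) :=
    fun i => ((Lp.memLp (fs i)).aestronglyMeasurable).stronglyMeasurable_mk.measurable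
  have hFae : ∀ i, ((fs i : M₁ → ℂ)) =ᵐ[μ₁] F i :=
    fun i => ((Lp.memLp (fs i)).aestronglyMeasurable).ae_eq_mk
  set G : Fin M → M₂ → ℂ :=
    fun i => ((Lp.memLp ((Ts i) (fs i))).aestronglyMeasurable).mk _ with hGdef
  have hGm : ∀ i, Measurable (G i) :=
    fun i => ((Lp.memLp ((Ts i) (fs i))).aestronglyMeasurable).stronglyMeasurable_mk.measurable
  have hGae : ∀ i, (((Ts i) (fs i) : M₂ → ℂ)) =ᵐ[μ₂] G i :=
    fun i => ((Lp.memLp ((Ts i) (fs i))).aestronglyMeasurable).ae_eq_mk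
  have hnFm : ∀ i, Measurable fun y => (‖F i y‖₊ : ℝ≥0∞) := fun i => (hFm i).enorm
  have hhEm : ∀ ε : Fin M → Fin 2,
      Measurable fun y => ENNReal.ofReal |SS (fun i => ‖F i y‖) ε| := by
    intro ε
    apply Measurable.ennreal_ofReal
    apply Measurable.abs
    exact Finset.measurable_sum Finset.univ fun i _ => ((hFm i).norm).const_mul (sg (ε i))
  set L : Fin M → M₂ → ℝ≥0∞ :=
    fun i x => ∫⁻ y, ENNReal.ofReal (k (x, y)) * (‖F i y‖₊ : ℝ≥0∞) ∂μ₁ with hLdef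
  have hLm : ∀ i, Measurable (L i) := by
    intro i
    apply Measurable.lintegral_prod_right
      (f := fun x y => ENNReal.ofReal (k (x, y)) * (‖F i y‖₊ : ℝ≥0∞))
    exact hk.ennreal_ofReal.mul ((hFm i).enorm.comp measurable_snd)
  have hFq : ∀ i, ∫⁻ y, (‖F i y‖₊ : ℝ≥0∞) ^ q ∂μ₁ < ⊤ := by
    intro i
    apply lintegral_rpow_lt_top_of_rpow_inv hq0
    have h1 : eLpNorm (F i) (ENNReal.ofReal q) μ₁ < ⊤ := by
      rw [← eLpNorm_congr_ae (hFae i)]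
      exact Lp.eLpNorm_lt_top (fs i)
    rwa [eLpNorm_eq_lintegral_rpow_enorm_toReal hp0 hptop, htr] at h1
  have hB : ∫⁻ y, (∑ i, (‖F i y‖₊ : ℝ≥0∞)) ^ q ∂μ₁ < ⊤ :=
    lpSumFin hq1' μ₁ _ hnFm hFq
  have hhEfin : ∀ ε : Fin M → Fin 2,
      ∫⁻ y, (ENNReal.ofReal |SS (fun i => ‖F i y‖) ε|) ^ q ∂μ₁ < ⊤ := by
    intro ε
    refine lt_of_le_of_lt (lintegral_mono fun y => ?_) hB
    exact ENNReal.rpow_le_rpow (ofReal_absSS_le ε fun i => F i y) hq0.le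
  have hdomG : ∀ i, ∀ᵐ x ∂μ₂, (‖G i x‖₊ : ℝ≥0∞) ≤ L i x := by
    intro i
    have h1 := hdom (Ts i) (hTs i) (fs i)
    have h2 : ∀ x, (∫⁻ y, ENNReal.ofReal (k (x, y)) * (‖(fs i : M₁ → ℂ) y‖₊ : ℝ≥0∞) ∂μ₁)
        = L i x := by
      intro x
      apply lintegral_congr_ae
      filter_upwards [hFae i] with y hy
      rw [hy]
    filter_upwards [h1, hGae i] with x hx1 hx2
    calc (‖G i x‖₊ : ℝ≥0∞) = (‖((Ts i) (fs i) : M₂ → ℂ) x‖₊ : ℝ≥0∞) := by rw [hx2]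
    _ ≤ ∫⁻ y, ENNReal.ofReal (k (x, y)) * (‖(fs i : M₁ → ℂ) y‖₊ : ℝ≥0∞) ∂μ₁ := hx1
    _ = L i x := h2 x
  have hLfin : ∀ i, ∀ᵐ x ∂μ₂, L i x < ⊤ := by
    intro i
    have h1 := hK (fun y => (‖F i y‖₊ : ℝ≥0∞)) (hnFm i) (hFq i)
    have h2 : ∫⁻ x, (L i x) ^ q ∂μ₂ < ⊤ := by
      apply lintegral_rpow_lt_top_of_rpow_inv hq0
      refine lt_of_le_of_lt h1 ?_
      exact ENNReal.mul_lt_top ENNReal.ofReal_lt_top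
        ((ENNReal.rpow_lt_top_iff_of_pos (by positivity)).2 (hFq i))
    filter_upwards [ae_lt_top (measurable_ennrpow (hLm i) q) h2.ne] with x hx
    exact (ENNReal.rpow_lt_top_iff_of_pos hq0).1 hx
  -- measurability of the various integrands
  have hmX : ∀ ε : Fin M → Fin 2,
      Measurable fun x => (‖∑ i, sg (ε i) • G i x‖₊ : ℝ≥0∞) ^ q := fun ε =>
    measurable_ennrpow
      ((Finset.measurable_sum Finset.univ fun i _ => (hGm i).const_smul (sg (ε i))).enorm) q
  have hmY : ∀ ε : Fin M → Fin 2,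
      Measurable fun y => (‖∑ i, sg (ε i) • F i y‖₊ : ℝ≥0∞) ^ q := fun ε =>
    measurable_ennrpow
      ((Finset.measurable_sum Finset.univ fun i _ => (hFm i).const_smul (sg (ε i))).enorm) q
  have hmKin : ∀ ε : Fin M → Fin 2, Measurable fun x =>
      (∫⁻ y, ENNReal.ofReal (k (x, y)) * ENNReal.ofReal |SS (fun i => ‖F i y‖) ε| ∂μ₁) := by
    intro ε
    apply Measurable.lintegral_prod_right
      (f := fun x y => ENNReal.ofReal (k (x, y)) * ENNReal.ofReal |SS (fun i => ‖F i y‖) ε|)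
    exact hk.ennreal_ofReal.mul ((hhEm ε).comp measurable_snd)
  -- pointwise estimate in x
  have pointX : ∀ x, (∀ i, (‖G i x‖₊ : ℝ≥0∞) ≤ L i x) → (∀ i, L i x < ⊤) →
      (∑ ε : Fin M → Fin 2, (‖∑ i, sg (ε i) • G i x‖₊ : ℝ≥0∞) ^ q)
        ≤ (2 : ℝ≥0∞) ^ q * ∑ ε : Fin M → Fin 2,
          (∫⁻ y, ENNReal.ofReal (k (x, y)) * ENNReal.ofReal |SS (fun i => ‖F i y‖) ε| ∂μ₁) ^ q := by
    intro x hd hf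
    have hGle : ∀ i, ‖G i x‖ ≤ (L i x).toReal := by
      intro i
      have h3 := ENNReal.toReal_mono (hf i).ne (hd i)
      simpa using h3
    have hreal1 : ∑ ε : Fin M → Fin 2, ‖∑ i, sg (ε i) • G i x‖ ^ q
        ≤ 2 ^ q * QQ q (fun i => (L i x).toReal) :=
      ptI hq1' (fun i => G i x) (fun i => (L i x).toReal) hGle
    have hker : ∀ ε : Fin M → Fin 2, |SS (fun i => (L i x).toReal) ε|
        ≤ (∫⁻ y, ENNReal.ofReal (k (x, y))
            * ENNReal.ofReal |SS (fun i => ‖F i y‖) ε| ∂μ₁).toReal := by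
      intro ε
      exact SS_kernel_bound (fun y => ENNReal.ofReal (k (x, y)))
        (hk.ennreal_ofReal.comp measurable_prodMk_left) F hFm ε (fun i => hf i)
    have hfinKint : ∀ ε : Fin M → Fin 2,
        (∫⁻ y, ENNReal.ofReal (k (x, y)) * ENNReal.ofReal |SS (fun i => ‖F i y‖) ε| ∂μ₁) ≠ ⊤ := by
      intro ε
      have hfs : (∑ i : Fin M, L i x) ≠ ⊤ :=
        (ENNReal.sum_lt_top.2 fun i _ => hf i).ne
      refine ne_top_of_le_ne_top hfs ?_
      calc (∫⁻ y, ENNReal.ofReal (k (x, y)) * ENNReal.ofReal |SS (fun i => ‖F i y‖) ε| ∂μ₁)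
          ≤ ∫⁻ y, ENNReal.ofReal (k (x, y)) * ∑ i, (‖F i y‖₊ : ℝ≥0∞) ∂μ₁ :=
            lintegral_mono fun y => mul_le_mul_right (ofReal_absSS_le ε fun i => F i y) _
      _ = ∑ i, L i x :=
            lintegral_mul_nnnorm_sum (fun y => ENNReal.ofReal (k (x, y)))
              (hk.ennreal_ofReal.comp measurable_prodMk_left) F hFm
    calc (∑ ε : Fin M → Fin 2, (‖∑ i, sg (ε i) • G i x‖₊ : ℝ≥0∞) ^ q)
        = ENNReal.ofReal (∑ ε : Fin M → Fin 2, ‖∑ i, sg (ε i) • G i x‖ ^ q) := by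
          rw [ENNReal.ofReal_sum_of_nonneg
            (fun ε _ => Real.rpow_nonneg (norm_nonneg _) q)]
          refine Finset.sum_congr rfl fun ε _ => ?_
          rw [← enorm_eq_nnnorm, ← ofReal_norm, ENNReal.ofReal_rpow_of_nonneg (norm_nonneg _) hq0.le]
    _ ≤ ENNReal.ofReal (2 ^ q * ∑ ε : Fin M → Fin 2,
          ((∫⁻ y, ENNReal.ofReal (k (x, y))
            * ENNReal.ofReal |SS (fun i => ‖F i y‖) ε| ∂μ₁).toReal) ^ q) := by
          apply ENNReal.ofReal_le_ofReal
          refine le_trans hreal1 ?_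
          apply mul_le_mul_of_nonneg_left _ (Real.rpow_nonneg (by norm_num) q)
          unfold QQ
          refine Finset.sum_le_sum fun ε _ => ?_
          exact Real.rpow_le_rpow (abs_nonneg _) (hker ε) hq0.le
    _ = (2 : ℝ≥0∞) ^ q * ∑ ε : Fin M → Fin 2,
          (∫⁻ y, ENNReal.ofReal (k (x, y))
            * ENNReal.ofReal |SS (fun i => ‖F i y‖) ε| ∂μ₁) ^ q := by
          rw [ENNReal.ofReal_mul (Real.rpow_nonneg (by norm_num) q)]
          congr 1
          · rw [← ENNReal.ofReal_rpow_of_nonneg (by norm_num : (0:ℝ) ≤ 2) hq0.le]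
            norm_num
          · rw [ENNReal.ofReal_sum_of_nonneg
              (fun ε _ => Real.rpow_nonneg ENNReal.toReal_nonneg q)]
            refine Finset.sum_congr rfl fun ε _ => ?_
            rw [← ENNReal.ofReal_rpow_of_nonneg ENNReal.toReal_nonneg hq0.le,
              ENNReal.ofReal_toReal (hfinKint ε)]
  -- main chain
  have mainX : (∑ ε : Fin M → Fin 2, ∫⁻ x, (‖∑ i, sg (ε i) • G i x‖₊ : ℝ≥0∞) ^ q ∂μ₂)
      ≤ (2 : ℝ≥0∞) ^ q * ∑ ε : Fin M → Fin 2, ∫⁻ x,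
          (∫⁻ y, ENNReal.ofReal (k (x, y))
            * ENNReal.ofReal |SS (fun i => ‖F i y‖) ε| ∂μ₁) ^ q ∂μ₂ := by
    rw [← lintegral_finset_sum Finset.univ fun ε _ => hmX ε,
      ← lintegral_finset_sum Finset.univ fun ε _ => measurable_ennrpow (hmKin ε) q,
      ← lintegral_const_mul _ (Finset.measurable_sum Finset.univ
        fun ε _ => measurable_ennrpow (hmKin ε) q)]
    apply lintegral_mono_ae
    filter_upwards [(ae_all_iff.2 hdomG).and (ae_all_iff.2 hLfin)] with x hx
    exact pointX x hx.1 hx.2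
  have mainK : (∑ ε : Fin M → Fin 2, ∫⁻ x,
        (∫⁻ y, ENNReal.ofReal (k (x, y))
          * ENNReal.ofReal |SS (fun i => ‖F i y‖) ε| ∂μ₁) ^ q ∂μ₂)
      ≤ (ENNReal.ofReal A) ^ q * ∑ ε : Fin M → Fin 2,
          ∫⁻ y, (ENNReal.ofReal |SS (fun i => ‖F i y‖) ε|) ^ q ∂μ₁ := by
    rw [Finset.mul_sum]
    refine Finset.sum_le_sum fun ε _ => ?_
    exact rpow_inv_le hq0
      (hK (fun y => ENNReal.ofReal |SS (fun i => ‖F i y‖) ε|) (hhEm ε) (hhEfin ε))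
  have pointH : ∀ y, (∑ ε : Fin M → Fin 2, (ENNReal.ofReal |SS (fun i => ‖F i y‖) ε|) ^ q)
      ≤ (2 : ℝ≥0∞) ^ q * ∑ ε : Fin M → Fin 2, (‖∑ i, sg (ε i) • F i y‖₊ : ℝ≥0∞) ^ q := by
    intro y
    calc (∑ ε : Fin M → Fin 2, (ENNReal.ofReal |SS (fun i => ‖F i y‖) ε|) ^ q)
        = ENNReal.ofReal (QQ q (fun i => ‖F i y‖)) := by
          unfold QQ
          rw [ENNReal.ofReal_sum_of_nonneg (fun ε _ => Real.rpow_nonneg (abs_nonneg _) q)]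
          refine Finset.sum_congr rfl fun ε _ => ?_
          rw [ENNReal.ofReal_rpow_of_nonneg (abs_nonneg _) hq0.le]
    _ ≤ ENNReal.ofReal (2 ^ q * ∑ ε : Fin M → Fin 2, ‖∑ i, sg (ε i) • F i y‖ ^ q) :=
          ENNReal.ofReal_le_ofReal (ptIII hq1' (fun i => F i y))
    _ = (2 : ℝ≥0∞) ^ q * ∑ ε : Fin M → Fin 2, (‖∑ i, sg (ε i) • F i y‖₊ : ℝ≥0∞) ^ q := by
          rw [ENNReal.ofReal_mul (Real.rpow_nonneg (by norm_num) q)]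
          congr 1
          · rw [← ENNReal.ofReal_rpow_of_nonneg (by norm_num : (0:ℝ) ≤ 2) hq0.le]
            norm_num
          · rw [ENNReal.ofReal_sum_of_nonneg
              (fun ε _ => Real.rpow_nonneg (norm_nonneg _) q)]
            refine Finset.sum_congr rfl fun ε _ => ?_
            rw [← enorm_eq_nnnorm, ← ofReal_norm,
              ENNReal.ofReal_rpow_of_nonneg (norm_nonneg _) hq0.le]
  have mainH : (∑ ε : Fin M → Fin 2, ∫⁻ y, (ENNReal.ofReal |SS (fun i => ‖F i y‖) ε|) ^ q ∂μ₁)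
      ≤ (2 : ℝ≥0∞) ^ q * ∑ ε : Fin M → Fin 2,
          ∫⁻ y, (‖∑ i, sg (ε i) • F i y‖₊ : ℝ≥0∞) ^ q ∂μ₁ := by
    rw [← lintegral_finset_sum Finset.univ fun ε _ => measurable_ennrpow (hhEm ε) q,
      ← lintegral_finset_sum Finset.univ fun ε _ => hmY ε,
      ← lintegral_const_mul _ (Finset.measurable_sum Finset.univ fun ε _ => hmY ε)]
    exact lintegral_mono pointH
  have main : (∑ ε : Fin M → Fin 2, ∫⁻ x, (‖∑ i, sg (ε i) • G i x‖₊ : ℝ≥0∞) ^ q ∂μ₂)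
      ≤ (ENNReal.ofReal (4 * A)) ^ q * ∑ ε : Fin M → Fin 2,
          ∫⁻ y, (‖∑ i, sg (ε i) • F i y‖₊ : ℝ≥0∞) ^ q ∂μ₁ := by
    have hconst : (ENNReal.ofReal (4 * A)) = 2 * ENNReal.ofReal A * 2 := by
      rw [ENNReal.ofReal_mul (by norm_num : (0:ℝ) ≤ 4)]
      have h4 : ENNReal.ofReal (4 : ℝ) = (4 : ℝ≥0∞) := by
        rw [show (4:ℝ) = ((4:ℕ):ℝ) by norm_num, ENNReal.ofReal_natCast]
        norm_num
      rw [h4]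
      ring
    calc (∑ ε : Fin M → Fin 2, ∫⁻ x, (‖∑ i, sg (ε i) • G i x‖₊ : ℝ≥0∞) ^ q ∂μ₂)
        ≤ (2 : ℝ≥0∞) ^ q * ((ENNReal.ofReal A) ^ q * ((2 : ℝ≥0∞) ^ q * ∑ ε : Fin M → Fin 2,
            ∫⁻ y, (‖∑ i, sg (ε i) • F i y‖₊ : ℝ≥0∞) ^ q ∂μ₁)) := by
          refine le_trans mainX ?_
          apply mul_le_mul_right
          refine le_trans mainK ?_
          apply mul_le_mul_right
          exact mainH
    _ = (ENNReal.ofReal (4 * A)) ^ q * ∑ ε : Fin M → Fin 2,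
            ∫⁻ y, (‖∑ i, sg (ε i) • F i y‖₊ : ℝ≥0∞) ^ q ∂μ₁ := by
          rw [hconst, ENNReal.mul_rpow_of_nonneg _ _ hq0.le,
            ENNReal.mul_rpow_of_nonneg _ _ hq0.le]
          ring
  -- pass to real-valued sums
  have hXr : ENNReal.ofReal (∑ ε : Fin M → Fin 2, ‖∑ i, sg (ε i) • (Ts i) (fs i)‖ ^ q)
      = ∑ ε : Fin M → Fin 2, ∫⁻ x, (‖∑ i, sg (ε i) • G i x‖₊ : ℝ≥0∞) ^ q ∂μ₂ := by
    rw [ENNReal.ofReal_sum_of_nonneg (fun ε _ => Real.rpow_nonneg (norm_nonneg _) q)]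
    exact Finset.sum_congr rfl fun ε _ =>
      ofReal_norm_rpow_eq hq0 (fun i => sg (ε i)) (fun i => (Ts i) (fs i)) G hGae
  have hYr : ENNReal.ofReal (∑ ε : Fin M → Fin 2, ‖∑ i, sg (ε i) • fs i‖ ^ q)
      = ∑ ε : Fin M → Fin 2, ∫⁻ y, (‖∑ i, sg (ε i) • F i y‖₊ : ℝ≥0∞) ^ q ∂μ₁ := by
    rw [ENNReal.ofReal_sum_of_nonneg (fun ε _ => Real.rpow_nonneg (norm_nonneg _) q)]
    exact Finset.sum_congr rfl fun ε _ =>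
      ofReal_norm_rpow_eq hq0 (fun i => sg (ε i)) fs F hFae
  have hYnn : (0:ℝ) ≤ ∑ ε : Fin M → Fin 2, ‖∑ i, sg (ε i) • fs i‖ ^ q :=
    Finset.sum_nonneg fun ε _ => Real.rpow_nonneg (norm_nonneg _) q
  have hXnn : (0:ℝ) ≤ ∑ ε : Fin M → Fin 2, ‖∑ i, sg (ε i) • (Ts i) (fs i)‖ ^ q :=
    Finset.sum_nonneg fun ε _ => Real.rpow_nonneg (norm_nonneg _) q
  have hrealmain : (∑ ε : Fin M → Fin 2, ‖∑ i, sg (ε i) • (Ts i) (fs i)‖ ^ q)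
      ≤ (4 * A) ^ q * ∑ ε : Fin M → Fin 2, ‖∑ i, sg (ε i) • fs i‖ ^ q := by
    rw [← ENNReal.ofReal_le_ofReal_iff
      (mul_nonneg (Real.rpow_nonneg (by positivity) q) hYnn)]
    rw [ENNReal.ofReal_mul (Real.rpow_nonneg (by positivity) q)]
    rw [← ENNReal.ofReal_rpow_of_nonneg (by positivity : (0:ℝ) ≤ 4 * A) hq0.le]
    rw [hXr, hYr]
    exact main
  -- distribution identity
  have hdx := dist_real M (fun v => ‖∑ i, v i • (Ts i) (fs i)‖ ^ q)
  have hdy := dist_real M (fun v => ‖∑ i, v i • fs i‖ ^ q)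
  simp only [] at hdx hdy
  rw [hdx, hdy]
  have hc0 : (0:ℝ) ≤ ((2:ℝ) ^ M)⁻¹ := by positivity
  rw [Real.mul_rpow hc0 hXnn, Real.mul_rpow hc0 hYnn]
  have hfinal : (∑ ε : Fin M → Fin 2, ‖∑ i, sg (ε i) • (Ts i) (fs i)‖ ^ q) ^ (1/q)
      ≤ (4 * A) * (∑ ε : Fin M → Fin 2, ‖∑ i, sg (ε i) • fs i‖ ^ q) ^ (1/q) := by
    calc (∑ ε : Fin M → Fin 2, ‖∑ i, sg (ε i) • (Ts i) (fs i)‖ ^ q) ^ (1/q)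
        ≤ ((4 * A) ^ q * ∑ ε : Fin M → Fin 2, ‖∑ i, sg (ε i) • fs i‖ ^ q) ^ (1/q) :=
          Real.rpow_le_rpow hXnn hrealmain (by positivity)
    _ = ((4 * A) ^ q) ^ (1/q) * (∑ ε : Fin M → Fin 2, ‖∑ i, sg (ε i) • fs i‖ ^ q) ^ (1/q) :=
          Real.mul_rpow (Real.rpow_nonneg (by positivity) q) hYnn
    _ = (4 * A) * (∑ ε : Fin M → Fin 2, ‖∑ i, sg (ε i) • fs i‖ ^ q) ^ (1/q) := by
          rw [← Real.rpow_mul (by positivity : (0:ℝ) ≤ 4 * A),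
            mul_one_div_cancel hq0.ne', Real.rpow_one]
  calc ((2:ℝ) ^ M)⁻¹ ^ (1/q) * (∑ ε : Fin M → Fin 2, ‖∑ i, sg (ε i) • (Ts i) (fs i)‖ ^ q) ^ (1/q)
      ≤ ((2:ℝ) ^ M)⁻¹ ^ (1/q) * ((4 * A)
          * (∑ ε : Fin M → Fin 2, ‖∑ i, sg (ε i) • fs i‖ ^ q) ^ (1/q)) :=
        mul_le_mul_of_nonneg_left hfinal (Real.rpow_nonneg hc0 _)
  _ = 4 * A * (((2:ℝ) ^ M)⁻¹ ^ (1/q)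
        * (∑ ε : Fin M → Fin 2, ‖∑ i, sg (ε i) • fs i‖ ^ q) ^ (1/q)) := by ring


end
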